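/- If the polar complex Γ(C) of a code C ⊆ 2^[n] is shellable, then either C = 2^[n] (so Γ(C) is the boundary of the n-cross-polytope, homotopy equivalent to S^{n−1}) or Γ(C) is collapsible. -/

import Mathlib

def polarFace {n : ℕ} (σ : Finset (Fin n)) : Finset (Fin n ⊕ Fin n) :=
  σ.image Sum.inl ∪ σᶜ.image Sum.inr

def polar {n : ℕ} (C : Set (Finset (Fin n))) : Set (Finset (Fin n ⊕ Fin n)) :=
  {F | ∃ σ ∈ C, F ⊆ polarFace σ}

section Collapse
variable {V : Type*} [DecidableEq V]

def IsFacet (Δ : Set (Finset V)) (τ : Finset V) : Prop :=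
  τ ∈ Δ ∧ ∀ s ∈ Δ, τ ⊆ s → s = τ

def FreePair (Δ : Set (Finset V)) (σ τ : Finset V) : Prop :=
  IsFacet Δ τ ∧ σ ⊂ τ ∧ ∀ τ', IsFacet Δ τ' → σ ⊆ τ' → τ' = τ

def CollapseStep (Δ Δ' : Set (Finset V)) : Prop :=
  ∃ σ τ, FreePair Δ σ τ ∧ Δ' = {ν ∈ Δ | ¬ σ ⊆ ν}

def Collapses (Δ Δ' : Set (Finset V)) : Prop :=
  Relation.ReflTransGen CollapseStep Δ Δ'

def Collapsible (Δ : Set (Finset V)) : Prop :=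
  Collapses Δ (∅ : Set (Finset V))

/-- A shelling order of a pure complex whose facets `F i` all have cardinality `k`:
each `Δ({F_i}) ∩ Δ({F₁,…,F_{i-1}})` is pure of dimension `k - 2`
(every face of it extends, inside it, to one of cardinality `k - 1`). -/
def IsShelling {t : ℕ} (k : ℕ) (F : Fin t → Finset V) : Prop :=
  (∀ i, (F i).card = k) ∧ Function.Injective F ∧
  ∀ i : Fin t, 0 < (i : ℕ) → ∀ ν ⊆ F i, (∃ j, j < i ∧ ν ⊆ F j) →
    ∃ μ, μ ⊆ F i ∧ (∃ j, j < i ∧ μ ⊆ F j) ∧ ν ⊆ μ ∧ μ.card = k - 1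

/-- `Δ` is shellable (with facets of cardinality `k`). -/
def Shellable (k : ℕ) (Δ : Set (Finset V)) : Prop :=
  ∃ (t : ℕ) (F : Fin t → Finset V), IsShelling k F ∧ Δ = {ν | ∃ i, ν ⊆ F i}

end Collapse

/-!
Let `F₀, …, F_{t-1}` be a shelling and `R_i ⊆ F_i` its restriction faces. When `R_i ≠ F_i`,
`(R_i, F_i)` is a free pair of the complex generated by `F₀, …, F_i`, and collapsing it leaves the
complex generated by `F₀, …, F_{i-1}`. So either every step is a collapse and `Γ(C)` is collapsible,
or at the first `i` with `R_i = F_i` the complex generated by `F₀, …, F_{i-1}` is collapsible, hence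
mod-2 acyclic; the boundary of `F_i` lies in it and therefore bounds there, which produces a mod-2
cycle of `Γ(C)` through `F_i`. Every ridge of the cross-polytope lies in exactly the two facets
`Σ(σ)` and `Σ(σ Δ {a})`, so such a cycle takes the same nonzero value on every `Σ(σ)`; hence
every `Σ(σ)` is a face of `Γ(C)` and `C = 2^[n]`.
-/

open Finset

section Collapse
variable {V : Type*}

lemma CollapseStep.isLowerSet {Δ Δ' : Set (Finset V)} (h : CollapseStep Δ Δ')
    (hΔ : IsLowerSet Δ) : IsLowerSet Δ' := by
  obtain ⟨σ, τ, -, rfl⟩ := h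
  exact fun ν μ hμν hν => ⟨hΔ hμν hν.1, fun hσμ => hν.2 (hσμ.trans hμν)⟩

lemma exists_isFacet_superset [Finite V] {Δ : Set (Finset V)} {ν : Finset V} (hν : ν ∈ Δ) :
    ∃ τ, IsFacet Δ τ ∧ ν ⊆ τ := by
  obtain ⟨τ, hντ, hτ⟩ := Finite.exists_le_maximal (p := (· ∈ Δ)) hν
  exact ⟨τ, ⟨hτ.prop, fun s hs hτs => (hτ.2 hs hτs).antisymm hτs⟩, hντ⟩

lemma FreePair.subset_of_superset [Finite V] {Δ : Set (Finset V)} {σ τ ν : Finset V}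
    (h : FreePair Δ σ τ) (hν : ν ∈ Δ) (hσν : σ ⊆ ν) : ν ⊆ τ := by
  obtain ⟨τ', hτ', hντ'⟩ := exists_isFacet_superset hν
  exact h.2.2 τ' hτ' (hσν.trans hντ') ▸ hντ'

end Collapse

section Chains
variable {V : Type*} [DecidableEq V] [Fintype V]

def chainBoundary : (Finset V → ZMod 2) →ₗ[ZMod 2] (Finset V → ZMod 2) where
  toFun c μ := ∑ x ∈ μᶜ, c (insert x μ)
  map_add' c d := by ext μ; simp [sum_add_distrib]
  map_smul' r c := by ext μ; simp [mul_sum]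

lemma chainBoundary_apply (c : Finset V → ZMod 2) (μ : Finset V) :
    chainBoundary c μ = ∑ x ∈ μᶜ, c (insert x μ) := rfl

lemma chainBoundary_chainBoundary (c : Finset V → ZMod 2) :
    chainBoundary (chainBoundary c) = 0 := by
  ext μ
  simp only [chainBoundary_apply, Pi.zero_apply]
  rw [sum_sigma']
  -- the ordered pairs `(x, y)` and `(y, x)` contribute the same face
  refine sum_involution (fun p _ => ⟨p.2, p.1⟩) (fun p _ => ?_) (fun p hp _ => ?_)
    (fun p hp => ?_) (fun p _ => rfl)
  · rw [insert_comm]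
    exact CharTwo.add_self_eq_zero _
  · simp only [mem_sigma, compl_insert, mem_erase] at hp
    simpa [Sigma.ext_iff] using fun h _ => hp.2.1 h
  · simp only [mem_sigma, compl_insert, mem_erase] at hp ⊢
    exact ⟨hp.2.2, hp.2.1.symm, hp.1⟩

lemma exists_ne_zero_of_chainBoundary_ne_zero {c : Finset V → ZMod 2} {μ : Finset V}
    (h : chainBoundary c μ ≠ 0) : ∃ x ∉ μ, c (insert x μ) ≠ 0 := by
  simpa using exists_ne_zero_of_sum_ne_zero h

lemma support_chainBoundary_subset {c : Finset V → ZMod 2} {Δ : Set (Finset V)}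
    (hΔ : IsLowerSet Δ) (hc : Function.support c ⊆ Δ) :
    Function.support (chainBoundary c) ⊆ Δ := fun μ hμ => by
  obtain ⟨x, -, hx⟩ := exists_ne_zero_of_chainBoundary_ne_zero hμ
  exact hΔ (subset_insert x μ) (hc hx)

lemma exists_eq_erase_of_chainBoundary_single_ne_zero {τ μ : Finset V}
    (h : chainBoundary (Pi.single τ 1) μ ≠ 0) : ∃ v ∈ τ, μ = τ.erase v := by
  obtain ⟨x, hx, hne⟩ := exists_ne_zero_of_chainBoundary_ne_zero h
  obtain rfl : insert x μ = τ := by by_contra h'; simp [h'] at hne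
  exact ⟨x, mem_insert_self x μ, (erase_insert hx).symm⟩

/-- Chains may be nonzero on the empty face, so this is acyclicity of the augmented chain
complex, i.e. vanishing of reduced mod-2 homology. -/
def IsAcyclic (Δ : Set (Finset V)) : Prop :=
  ∀ z : Finset V → ZMod 2, Function.support z ⊆ Δ → chainBoundary z = 0 →
    ∃ c, Function.support c ⊆ Δ ∧ chainBoundary c = z

lemma isAcyclic_empty : IsAcyclic (∅ : Set (Finset V)) := fun z hz _ =>
  ⟨0, by simp, by ext ν; simpa using (Function.support_subset_iff'.mp hz ν id).symm⟩

lemma IsAcyclic.exists_cycle {Δ : Set (Finset V)} (hΔ : IsAcyclic Δ) {τ : Finset V}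
    (hτ : τ ∉ Δ) (hfaces : ∀ v ∈ τ, τ.erase v ∈ Δ) :
    ∃ z : Finset V → ZMod 2, Function.support z ⊆ insert τ Δ ∧ chainBoundary z = 0 ∧ z τ ≠ 0 := by
  have hbd : Function.support (chainBoundary (Pi.single τ 1)) ⊆ Δ := fun μ hμ => by
    obtain ⟨v, hv, rfl⟩ := exists_eq_erase_of_chainBoundary_single_ne_zero hμ
    exact hfaces v hv
  obtain ⟨c, hc, hcz⟩ := hΔ _ hbd (chainBoundary_chainBoundary _)
  have hcτ : c τ = 0 := Function.notMem_support.mp fun h => hτ (hc h)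
  refine ⟨Pi.single τ 1 - c, fun ν hν => ?_, by rw [map_sub, hcz, sub_self], by simp [hcτ]⟩
  by_cases h : ν = τ
  · exact Or.inl h
  · exact Or.inr (hc (by simpa [Pi.single_apply, h] using hν))

def cone (v : V) (σ : Finset V) (z : Finset V → ZMod 2) : Finset V → ZMod 2 :=
  fun ν => if v ∈ ν ∧ σ ⊆ ν then z (ν.erase v) else 0

lemma chainBoundary_cone_apply {z : Finset V → ZMod 2} (hz : chainBoundary z = 0) {v : V}
    {σ μ : Finset V} (hvσ : v ∉ σ) (hσμ : σ ⊆ μ) : chainBoundary (cone v σ z) μ = z μ := by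
  rw [chainBoundary_apply]
  by_cases hvμ : v ∈ μ
  · have hcycle := congr_fun hz (μ.erase v)
    rw [chainBoundary_apply, compl_erase, sum_insert (by simpa using hvμ), insert_erase hvμ,
      Pi.zero_apply, CharTwo.add_eq_zero] at hcycle
    rw [hcycle]
    refine sum_congr rfl fun x hx => ?_
    have hxv : x ≠ v := by rintro rfl; simp_all
    simp [cone, hvμ, hσμ.trans (subset_insert x μ), erase_insert_of_ne hxv]
  · rw [sum_eq_single_of_mem v (by simpa using hvμ) fun x _ hxv => ?_]
    · simp [cone, hσμ.trans (subset_insert v μ), erase_insert hvμ]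
    · simp [cone, hxv.symm, hvμ]

lemma IsAcyclic.of_deleteStar {Δ : Set (Finset V)} (hΔ : IsLowerSet Δ) {σ τ : Finset V} {v : V}
    (hτ : τ ∈ Δ) (hvτ : v ∈ τ) (hvσ : v ∉ σ) (hstar : ∀ ν ∈ Δ, σ ⊆ ν → ν ⊆ τ)
    (h : IsAcyclic {ν ∈ Δ | ¬ σ ⊆ ν}) : IsAcyclic Δ := by
  intro z hz hzc
  -- subtracting the boundary of the cone over `z` with apex `v` clears `z` off the star of `σ`
  have hw : Function.support (cone v σ z) ⊆ Δ := fun ν hν => by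
    simp only [cone, Function.mem_support, ne_eq, ite_eq_right_iff, not_forall] at hν
    obtain ⟨⟨hvν, hσν⟩, hzν⟩ := hν
    have hντ : ν.erase v ⊆ τ := hstar _ (hz hzν) (subset_erase.mpr ⟨hσν, hvσ⟩)
    exact hΔ (by simpa [insert_erase hvν] using insert_subset hvτ hντ) hτ
  have hz' : Function.support (z - chainBoundary (cone v σ z)) ⊆ {ν ∈ Δ | ¬ σ ⊆ ν} :=
    fun ν hν => ⟨(Function.support_sub _ _).trans
      (Set.union_subset hz (support_chainBoundary_subset hΔ hw)) hν,
      fun hσν => hν (by simp [chainBoundary_cone_apply hzc hvσ hσν])⟩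
  obtain ⟨c, hc, hcz⟩ := h _ hz' (by rw [map_sub, hzc, chainBoundary_chainBoundary, sub_zero])
  exact ⟨c + cone v σ z, (Function.support_add _ _).trans (Set.union_subset
    (hc.trans fun ν hν => hν.1) hw), by rw [map_add, hcz, sub_add_cancel]⟩

lemma IsAcyclic.of_collapseStep {Δ Δ' : Set (Finset V)} (hΔ : IsLowerSet Δ)
    (h : CollapseStep Δ Δ') (h' : IsAcyclic Δ') : IsAcyclic Δ := by
  obtain ⟨σ, τ, hfree, rfl⟩ := h
  obtain ⟨v, hvτ, hvσ⟩ := exists_of_ssubset hfree.2.1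
  exact IsAcyclic.of_deleteStar hΔ hfree.1.1 hvτ hvσ (fun _ => hfree.subset_of_superset) h'

lemma Collapses.isAcyclic {Δ Δ' : Set (Finset V)} (h : Collapses Δ Δ') (hΔ : IsLowerSet Δ)
    (h' : IsAcyclic Δ') : IsAcyclic Δ := by
  induction h using Relation.ReflTransGen.head_induction_on with
  | refl => exact h'
  | head hstep _ ih => exact IsAcyclic.of_collapseStep hΔ hstep (ih (hstep.isLowerSet hΔ))

end Chains

section Shelling
variable {V : Type*} {t k : ℕ} {F : Fin t → Finset V}

def prefixComplex (F : Fin t → Finset V) (m : ℕ) : Set (Finset V) :=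
  {ν | ∃ j : Fin t, (j : ℕ) < m ∧ ν ⊆ F j}

lemma prefixComplex_zero : prefixComplex F 0 = ∅ := by
  simp [prefixComplex]

lemma prefixComplex_mono : Monotone (prefixComplex F) :=
  fun _ _ hm _ ⟨j, hj, hν⟩ => ⟨j, hj.trans_le hm, hν⟩

lemma isLowerSet_prefixComplex (m : ℕ) : IsLowerSet (prefixComplex F m) :=
  fun _ _ hμν ⟨j, hj, hν⟩ => ⟨j, hj, hμν.trans hν⟩

lemma mem_prefixComplex_succ {i : Fin t} {ν : Finset V} :
    ν ∈ prefixComplex F (i + 1) ↔ ν ∈ prefixComplex F i ∨ ν ⊆ F i := by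
  constructor
  · rintro ⟨j, hj, hν⟩
    rcases Nat.lt_succ_iff_lt_or_eq.mp hj with hj | hj
    · exact Or.inl ⟨j, hj, hν⟩
    · exact Or.inr (Fin.ext hj ▸ hν)
  · rintro (⟨j, hj, hν⟩ | hν)
    · exact ⟨j, hj.trans (Nat.lt_add_one _), hν⟩
    · exact ⟨i, Nat.lt_add_one _, hν⟩

lemma IsShelling.isFacet (hF : IsShelling k F) {i : Fin t} {m : ℕ} (him : (i : ℕ) < m) :
    IsFacet (prefixComplex F m) (F i) := by
  refine ⟨⟨i, him, subset_rfl⟩, fun s ⟨j, _, hsj⟩ hFs => ?_⟩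
  have hFj : F i = F j :=
    eq_of_subset_of_card_le (hFs.trans hsj) (by rw [hF.1, hF.1])
  exact subset_antisymm (hFj ▸ hsj) hFs

variable [DecidableEq V]

open Classical in
noncomputable def restriction (F : Fin t → Finset V) (i : Fin t) : Finset V :=
  {v ∈ F i | (F i).erase v ∈ prefixComplex F i}

lemma mem_restriction {i : Fin t} {v : V} :
    v ∈ restriction F i ↔ v ∈ F i ∧ (F i).erase v ∈ prefixComplex F i := by
  classical
  simp [restriction]

lemma restriction_subset (i : Fin t) : restriction F i ⊆ F i :=
  fun _ hv => (mem_restriction.mp hv).1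

namespace IsShelling

variable (hF : IsShelling k F)
include hF

lemma restriction_notMem_prefixComplex {i : Fin t} (hne : restriction F i ≠ F i) :
    restriction F i ∉ prefixComplex F i := by
  rintro ⟨j, hj, hRj⟩
  obtain ⟨μ, hμ, ⟨j', hj', hμj'⟩, hRμ, hμk⟩ :=
    hF.2.2 i (Nat.zero_lt_of_lt hj) _ (restriction_subset i) ⟨j, hj, hRj⟩
  obtain ⟨v, hvF, hvR⟩ := exists_of_ssubset (ssubset_of_subset_of_ne (restriction_subset i) hne)
  have hk : 0 < k := hF.1 i ▸ card_pos.mpr ⟨v, hvF⟩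
  obtain ⟨w, hwF, hwμ⟩ :=
    exists_mem_notMem_of_card_lt_card (s := μ) (t := F i) (by rw [hμk, hF.1 i]; omega)
  have hμw : μ = (F i).erase w := eq_of_subset_of_card_le (subset_erase.mpr ⟨hμ, hwμ⟩)
    (by rw [card_erase_of_mem hwF, hF.1 i, hμk])
  exact hwμ (hRμ (mem_restriction.mpr ⟨hwF, hμw ▸ ⟨j', hj', hμj'⟩⟩))

lemma collapseStep {i : Fin t} (hne : restriction F i ≠ F i) :
    CollapseStep (prefixComplex F (i + 1)) (prefixComplex F i) := by
  have hR := hF.restriction_notMem_prefixComplex hne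
  refine ⟨restriction F i, F i, ⟨hF.isFacet (Nat.lt_add_one _),
    ssubset_of_subset_of_ne (restriction_subset i) hne, fun τ hτ hRτ => ?_⟩, ?_⟩
  · obtain ⟨j, hj, hτj⟩ := hτ.1
    obtain rfl : F j = τ := hτ.2 _ ⟨j, hj, subset_rfl⟩ hτj
    rcases Nat.lt_succ_iff_lt_or_eq.mp hj with hj | hj
    · exact absurd ⟨j, hj, hRτ⟩ hR
    · rw [Fin.ext hj]
  · ext ν
    refine ⟨fun hν => ⟨prefixComplex_mono (Nat.le_succ _) hν,
      fun hRν => hR (isLowerSet_prefixComplex _ hRν hν)⟩, fun ⟨hν, hRν⟩ => ?_⟩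
    rcases mem_prefixComplex_succ.mp hν with hν | hνF
    · exact hν
    · obtain ⟨v, hvR, hvν⟩ := not_subset.mp hRν
      exact isLowerSet_prefixComplex _ (subset_erase.mpr ⟨hνF, hvν⟩)
        (mem_restriction.mp hvR).2

lemma exists_cycle [Fintype V] {i : Fin t} (heq : restriction F i = F i)
    (hacyc : IsAcyclic (prefixComplex F i)) :
    ∃ z, Function.support z ⊆ prefixComplex F (i + 1) ∧ chainBoundary z = 0 ∧ z (F i) ≠ 0 := by
  have hFi : F i ∉ prefixComplex F i := fun ⟨j, hj, hij⟩ =>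
    hj.ne (congrArg Fin.val (hF.2.1 (eq_of_subset_of_card_le hij (by rw [hF.1, hF.1])).symm))
  obtain ⟨z, hz, hzc, hzi⟩ := hacyc.exists_cycle hFi fun v hv =>
    (mem_restriction.mp (heq.symm ▸ hv)).2
  refine ⟨z, hz.trans (Set.insert_subset ?_ (prefixComplex_mono (Nat.le_succ _))), hzc, hzi⟩
  exact mem_prefixComplex_succ.mpr (Or.inr subset_rfl)

lemma collapsible_or_exists_cycle [Fintype V] :
    Collapsible (prefixComplex F t) ∨ ∃ z, Function.support z ⊆ prefixComplex F t ∧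
      chainBoundary z = 0 ∧ ∃ i, z (F i) ≠ 0 := by
  suffices ∀ m ≤ t, Collapsible (prefixComplex F m) ∨
      ∃ z, Function.support z ⊆ prefixComplex F m ∧ chainBoundary z = 0 ∧ ∃ i, z (F i) ≠ 0 from
    this t le_rfl
  intro m hm
  induction m with
  | zero => exact Or.inl (prefixComplex_zero (F := F) ▸ Relation.ReflTransGen.refl)
  | succ m ih =>
    let i : Fin t := ⟨m, hm⟩
    rcases ih (Nat.le_of_succ_le hm) with hcol | ⟨z, hz, hzc, hzi⟩
    · by_cases heq : restriction F i = F i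
      · have hacyc := Collapses.isAcyclic hcol (isLowerSet_prefixComplex _) isAcyclic_empty
        obtain ⟨z, hz, hzc, hzi⟩ := hF.exists_cycle heq hacyc
        exact Or.inr ⟨z, hz, hzc, i, hzi⟩
      · exact Or.inl (Relation.ReflTransGen.head (hF.collapseStep heq) hcol)
    · exact Or.inr ⟨z, hz.trans (prefixComplex_mono (Nat.le_succ m)), hzc, hzi⟩

end IsShelling

lemma Shellable.collapsible_or_exists_cycle [Fintype V] {Δ : Set (Finset V)}
    (h : Shellable k Δ) : Collapsible Δ ∨ ∃ z, Function.support z ⊆ Δ ∧ chainBoundary z = 0 ∧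
      ∃ τ ∈ Δ, τ.card = k ∧ z τ ≠ 0 := by
  obtain ⟨t, F, hF, rfl⟩ := h
  have hΔ : prefixComplex F t = {ν | ∃ i, ν ⊆ F i} := by
    ext ν
    exact ⟨fun ⟨i, _, hν⟩ => ⟨i, hν⟩, fun ⟨i, hν⟩ => ⟨i, i.isLt, hν⟩⟩
  rw [← hΔ]
  refine hF.collapsible_or_exists_cycle.imp_right fun ⟨z, hz, hzc, i, hzi⟩ => ?_
  exact ⟨z, hz, hzc, F i, ⟨i, i.isLt, subset_rfl⟩, hF.1 i, hzi⟩

end Shelling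

section Polar
variable {n : ℕ}

lemma polarFace_eq_disjSum (σ : Finset (Fin n)) : polarFace σ = σ.disjSum σᶜ := by
  ext (a | a) <;> simp [polarFace]

@[simp]
lemma inl_mem_polarFace {σ : Finset (Fin n)} {a : Fin n} : .inl a ∈ polarFace σ ↔ a ∈ σ := by
  simp [polarFace_eq_disjSum]

@[simp]
lemma inr_mem_polarFace {σ : Finset (Fin n)} {a : Fin n} : .inr a ∈ polarFace σ ↔ a ∉ σ := by
  simp [polarFace_eq_disjSum]

lemma card_polarFace (σ : Finset (Fin n)) : (polarFace σ).card = n := by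
  rw [polarFace_eq_disjSum, card_disjSum, card_add_card_compl, Fintype.card_fin]

lemma polarFace_subset_polarFace {σ σ' : Finset (Fin n)} :
    polarFace σ ⊆ polarFace σ' ↔ σ = σ' := by
  refine ⟨fun h => ?_, fun h => h ▸ subset_rfl⟩
  ext a
  exact ⟨fun ha => inl_mem_polarFace.mp (h (inl_mem_polarFace.mpr ha)),
    fun ha => not_not.mp fun ha' => inr_mem_polarFace.mp (h (inr_mem_polarFace.mpr ha')) ha⟩

lemma exists_eq_polarFace_of_mem_polar {C : Set (Finset (Fin n))} {ν : Finset (Fin n ⊕ Fin n)}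
    (hν : ν ∈ polar C) (hcard : ν.card = n) : ∃ σ ∈ C, ν = polarFace σ := by
  obtain ⟨σ, hσ, hνσ⟩ := hν
  exact ⟨σ, hσ, eq_of_subset_of_card_le hνσ (by rw [card_polarFace, hcard])⟩

/-- The ridge `ρ` of the cross-polytope left by deleting the vertex of index `a` lies only in the
facets `insert (inl a) ρ` and `insert (inr a) ρ`, so the cycle condition at `ρ` equates them. -/
lemma cycle_polarFace_insert_eq_erase {C : Set (Finset (Fin n))}
    {z : Finset (Fin n ⊕ Fin n) → ZMod 2} (hz : Function.support z ⊆ polar C)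
    (hzc : chainBoundary z = 0) (σ : Finset (Fin n)) (a : Fin n) :
    z (polarFace (insert a σ)) = z (polarFace (σ.erase a)) := by
  set ρ := (polarFace (insert a σ)).erase (.inl a)
  have hinl : polarFace (insert a σ) = insert (.inl a) ρ := (insert_erase (by simp)).symm
  have hinr : polarFace (σ.erase a) = insert (.inr a) ρ := by
    ext (b | b) <;> by_cases hb : b = a <;> simp [ρ, hb]
  have hother : ∀ x ∈ ρᶜ, x ∉ ({.inl a, .inr a} : Finset _) → z (insert x ρ) = 0 := by
    intro x hx hxa
    by_contra hne
    obtain ⟨τ, -, hτ⟩ := hz hne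
    have hxτ := hτ (mem_insert_self x ρ)
    cases x with
    | inl b =>
      have : .inr b ∈ polarFace τ := hτ (mem_insert_of_mem (by simp_all [ρ]))
      simp_all
    | inr b =>
      have : .inl b ∈ polarFace τ := hτ (mem_insert_of_mem (by simp_all [ρ]))
      simp_all
  have hcycle := congr_fun hzc ρ
  rw [chainBoundary_apply, Pi.zero_apply, ← sum_subset (by simp [ρ]) hother,
    sum_pair Sum.inl_ne_inr, CharTwo.add_eq_zero] at hcycle
  rw [hinl, hinr, hcycle]

lemma cycle_polarFace_eq {C : Set (Finset (Fin n))} {z : Finset (Fin n ⊕ Fin n) → ZMod 2}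
    (hz : Function.support z ⊆ polar C) (hzc : chainBoundary z = 0) (σ : Finset (Fin n)) :
    z (polarFace σ) = z (polarFace ∅) := by
  induction σ using Finset.induction_on with
  | empty => rfl
  | insert a s ha ih =>
    rw [cycle_polarFace_insert_eq_erase hz hzc, erase_eq_of_notMem ha, ih]

lemma eq_univ_of_cycle {C : Set (Finset (Fin n))} {z : Finset (Fin n ⊕ Fin n) → ZMod 2}
    (hz : Function.support z ⊆ polar C) (hzc : chainBoundary z = 0) {σ : Finset (Fin n)}
    (hσ : z (polarFace σ) ≠ 0) : C = Set.univ := by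
  refine Set.eq_univ_of_forall fun σ' => ?_
  rw [cycle_polarFace_eq hz hzc, ← cycle_polarFace_eq hz hzc σ'] at hσ
  obtain ⟨σ'', hσ'', hsub⟩ := hz hσ
  rwa [polarFace_subset_polarFace.mp hsub]

end Polar

/-- If the polar complex `Γ(C)` is shellable then either `C` is the full code `2^[n]`
or `Γ(C)` is collapsible. -/
theorem shellable_polar_full_or_collapsible {n : ℕ} (C : Set (Finset (Fin n)))
    (hsh : Shellable n (polar C)) :
    C = Set.univ ∨ Collapsible (polar C) := by
  rcases hsh.collapsible_or_exists_cycle with h | ⟨z, hz, hzc, τ, hτ, hτn, hzτ⟩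
  · exact Or.inr h
  · obtain ⟨σ, -, rfl⟩ := exists_eq_polarFace_of_mem_polar hτ hτn
    exact Or.inl (eq_univ_of_cycle hz hzc hzτ)
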